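/- Let g be the 8-dimensional graded Lie algebra g_{-2}⊕g_{-1}⊕g_0⊕g_1⊕g_2 with basis (t,h1,h2,d,r,i1,i2,j) and the bracket table above, and let g_- = ℝt ⊕ ℝh1 ⊕ ℝh2. A 2-cochain Φ ∈ Λ²g_-* ⊗ g with coefficients φ (in the basis t*∧h1*, t*∧h2*, h1*∧h2* tensored with the 8 basis vectors) is a cocycle (∂Φ = 0) if and only if the following 7 linear equations hold: 2φ_d^{h1h2} − 4φ_{h2}^{th2} − 4φ_{h1}^{th1} = 0; φ_{i1}^{h1h2} − φ_d^{th2} − φ_r^{th1} = 0; φ_{i2}^{h1h2} − φ_r^{th2} + φ_d^{th1} = 0; φ_j^{h1h2} − 2φ_{i2}^{th2} − 2φ_{i1}^{th1} = 0; −6φ_{i1}^{th2} + 6φ_{i2}^{th1} = 0; φ_j^{th2} = 0; φ_j^{th1} = 0. -/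
import Mathlib


/-- The prolonged Heisenberg Lie algebra `g` with basis `(t,h1,h2,d,r,i1,i2,j)`,
identified with coordinates `0,…,7` of `Fin 8 → ℝ`. -/
def gBracket (x y : Fin 8 → ℝ) : Fin 8 → ℝ :=
  ![2 * (x 0 * y 3 - x 3 * y 0) + 4 * (x 1 * y 2 - x 2 * y 1),
    (x 0 * y 5 - x 5 * y 0) + (x 1 * y 3 - x 3 * y 1) - (x 2 * y 4 - x 4 * y 2),
    (x 0 * y 6 - x 6 * y 0) + (x 1 * y 4 - x 4 * y 1) + (x 2 * y 3 - x 3 * y 2),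
    (x 0 * y 7 - x 7 * y 0) + 2 * (x 1 * y 6 - x 6 * y 1) - 2 * (x 2 * y 5 - x 5 * y 2),
    6 * (x 1 * y 5 - x 5 * y 1) + 6 * (x 2 * y 6 - x 6 * y 2),
    (x 1 * y 7 - x 7 * y 1) + (x 3 * y 5 - x 5 * y 3) + (x 4 * y 6 - x 6 * y 4),
    (x 2 * y 7 - x 7 * y 2) + (x 3 * y 6 - x 6 * y 3) - (x 4 * y 5 - x 5 * y 4),
    2 * (x 3 * y 7 - x 7 * y 3) + 4 * (x 5 * y 6 - x 6 * y 5)]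

/-- The basis vectors of `g`. -/
def e8 (i : Fin 8) : Fin 8 → ℝ := Pi.single i 1

/-- The 2-cochain `Φ ∈ Λ²g_-* ⊗ g` with values `Φ(t,h1) = u`, `Φ(t,h2) = v`,
`Φ(h1,h2) = w` (its 24 coefficients being the components of `u, v, w`),
as an alternating bilinear map on `g_- = ℝt ⊕ ℝh1 ⊕ ℝh2`. -/
def twoCochain (u v w x y : Fin 8 → ℝ) : Fin 8 → ℝ :=
  (x 0 * y 1 - x 1 * y 0) • u + (x 0 * y 2 - x 2 * y 0) • v + (x 1 * y 2 - x 2 * y 1) • w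

/-- The Chevalley–Eilenberg differential `∂Φ` evaluated on the generator
`t ∧ h1 ∧ h2` of the one-dimensional space `Λ³g_-`. -/
def d2 (u v w : Fin 8 → ℝ) : Fin 8 → ℝ :=
  gBracket (e8 0) (twoCochain u v w (e8 1) (e8 2))
    - gBracket (e8 1) (twoCochain u v w (e8 0) (e8 2))
    + gBracket (e8 2) (twoCochain u v w (e8 0) (e8 1))
    - twoCochain u v w (gBracket (e8 0) (e8 1)) (e8 2)
    + twoCochain u v w (gBracket (e8 0) (e8 2)) (e8 1)
    - twoCochain u v w (gBracket (e8 1) (e8 2)) (e8 0)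

variable {α : Type*}

@[simp] lemma vec8_2 (a b c d e f g h : α) : ![a,b,c,d,e,f,g,h] 2 = c := rfl
@[simp] lemma vec8_3 (a b c d e f g h : α) : ![a,b,c,d,e,f,g,h] 3 = d := rfl
@[simp] lemma vec8_4 (a b c d e f g h : α) : ![a,b,c,d,e,f,g,h] 4 = e := rfl
@[simp] lemma vec8_5 (a b c d e f g h : α) : ![a,b,c,d,e,f,g,h] 5 = f := rfl
@[simp] lemma vec8_6 (a b c d e f g h : α) : ![a,b,c,d,e,f,g,h] 6 = g := rfl
@[simp] lemma vec8_7 (a b c d e f g h : α) : ![a,b,c,d,e,f,g,h] 7 = h := rfl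

lemma e8_0 : e8 0 = ![1,0,0,0,0,0,0,0] := by
  funext i; fin_cases i <;> simp [e8, Pi.single_apply]

lemma e8_1 : e8 1 = ![0,1,0,0,0,0,0,0] := by
  funext i; fin_cases i <;> simp [e8, Pi.single_apply]

lemma e8_2 : e8 2 = ![0,0,1,0,0,0,0,0] := by
  funext i; fin_cases i <;> simp [e8, Pi.single_apply]

set_option maxHeartbeats 1000000 in
lemma d2_eq (u v w : Fin 8 → ℝ) :
    d2 u v w = ![2 * w 3 - 4 * v 2 - 4 * u 1, w 5 - v 3 - u 4, w 6 - v 4 + u 3,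
      w 7 - 2 * v 6 - 2 * u 5, -6 * v 5 + 6 * u 6, -v 7, u 7, 0] := by
  funext i
  fin_cases i <;>
    simp [d2, gBracket, twoCochain, e8_0, e8_1, e8_2] <;> ring


/-- A 2-cochain `Φ` with coefficient vectors
`u = Φ(t,h1)`, `v = Φ(t,h2)`, `w = Φ(h1,h2)` is a cocycle (`∂Φ = 0`) if and only if
the seven linear equations
`2φ_d^{h1h2} − 4φ_{h2}^{th2} − 4φ_{h1}^{th1} = 0`,
`φ_{i1}^{h1h2} − φ_d^{th2} − φ_r^{th1} = 0`,
`φ_{i2}^{h1h2} − φ_r^{th2} + φ_d^{th1} = 0`,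
`φ_j^{h1h2} − 2φ_{i2}^{th2} − 2φ_{i1}^{th1} = 0`,
`−6φ_{i1}^{th2} + 6φ_{i2}^{th1} = 0`,
`φ_j^{th2} = 0`, `φ_j^{th1} = 0` hold. -/
theorem cocycle_characterization :
    ∀ u v w : Fin 8 → ℝ,
      d2 u v w = 0 ↔
        (2 * w 3 - 4 * v 2 - 4 * u 1 = 0 ∧
         w 5 - v 3 - u 4 = 0 ∧
         w 6 - v 4 + u 3 = 0 ∧
         w 7 - 2 * v 6 - 2 * u 5 = 0 ∧
         -6 * v 5 + 6 * u 6 = 0 ∧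
         v 7 = 0 ∧
         u 7 = 0) := by
  intro u v w
  rw [d2_eq]
  constructor
  · intro h
    have h0 := congrFun h 0
    have h1 := congrFun h 1
    have h2 := congrFun h 2
    have h3 := congrFun h 3
    have h4 := congrFun h 4
    have h5 := congrFun h 5
    have h6 := congrFun h 6
    simp at h0 h1 h2 h3 h4 h5 h6
    refine ⟨?_, ?_, ?_, ?_, ?_, ?_, ?_⟩ <;> linarith
  · rintro ⟨a, b, c, d, e, f, g⟩
    funext i
    fin_cases i <;> simp <;> linarith
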